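/- Let f : {0,1}^n → ℤ_3 be arbitrary and let Φ_1, ..., Φ_t : {0,1}^n → ℤ_3 be distinct degree-1 polynomials such that (1) each Φ_i agrees with f on at least a 1/2 fraction of {0,1}^n, and (2) for all i ≠ j, the difference Φ_i − Φ_j has at least 6 variables with nonzero coefficients. Then t ≤ 31. -/

import Mathlib

/-!
Embed `g : {0,1}ⁿ → ℤ/3` as the vector `(ω^{g x})ₓ ∈ ℂ^{2ⁿ}`, of squared norm `N = 2ⁿ`.
Agreements contribute `1` and disagreements `Re ω^{±1} = -1/2` to `Re ⟪u, vᵢ⟫`, so agreement on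
half the cube gives `Re ⟪u, vᵢ⟫ ≥ N/4`. The cube sum of `ω^{Φⱼ - Φᵢ}` factors over the variables,
each variable with a nonzero coefficient contributing `|1 + ω^{±1}| = 1` instead of `2`, so
`|⟪vᵢ, vⱼ⟫| ≤ N/64`. Cauchy–Schwarz against `∑ vᵢ` then gives
`(tN/4)² ≤ N (tN + t(t-1)N/64)`, that is `t ≤ 21`.
-/

/-- Evaluation of a degree-1 polynomial `p = (a₀, a)` over `ZMod 3` at a Boolean point. -/
def linEval3 {n : ℕ} (p : ZMod 3 × (Fin n → ZMod 3)) (x : Fin n → Bool) : ZMod 3 :=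
  p.1 + ∑ i, if x i then p.2 i else 0

open Finset ZMod RCLike

section GramBound

variable {𝕜 E ι : Type*} [RCLike 𝕜] [NormedAddCommGroup E] [InnerProductSpace 𝕜 E] [Fintype ι]

theorem norm_sum_sq_le_of_re_inner_le (v : ι → E) {β : ℝ}
    (hβ : ∀ i j, i ≠ j → re (inner 𝕜 (v i) (v j)) ≤ β) :
    ‖∑ i, v i‖ ^ 2 ≤ ∑ i, ‖v i‖ ^ 2 + Fintype.card ι * (Fintype.card ι - 1) * β := by
  classical
  have hrow : ∀ i, re (inner 𝕜 (v i) (∑ j, v j)) ≤ ‖v i‖ ^ 2 + (Fintype.card ι - 1) * β := by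
    intro i
    rw [inner_sum, map_sum, ← Finset.add_sum_erase _ _ (mem_univ i), inner_self_eq_norm_sq]
    gcongr
    calc ∑ j ∈ univ.erase i, re (inner 𝕜 (v i) (v j))
        ≤ ∑ j ∈ univ.erase i, β := sum_le_sum fun j hj => hβ i j (ne_of_mem_erase hj).symm
      _ = (Fintype.card ι - 1) * β := by
        rw [sum_const, card_erase_of_mem (mem_univ i), nsmul_eq_mul, card_univ,
          Nat.cast_pred (Fintype.card_pos_iff.2 ⟨i⟩)]
  calc ‖∑ i, v i‖ ^ 2 = ∑ i, re (inner 𝕜 (v i) (∑ j, v j)) := by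
        rw [← inner_self_eq_norm_sq (𝕜 := 𝕜), sum_inner, map_sum]
    _ ≤ ∑ i, (‖v i‖ ^ 2 + (Fintype.card ι - 1) * β) := sum_le_sum fun i _ => hrow i
    _ = _ := by rw [sum_add_distrib, sum_const, card_univ, nsmul_eq_mul]; ring

theorem sq_card_mul_le_of_re_inner_bounds (u : E) (v : ι → E) {α β : ℝ} (hα₀ : 0 ≤ α)
    (hα : ∀ i, α ≤ re (inner 𝕜 u (v i)))
    (hβ : ∀ i j, i ≠ j → re (inner 𝕜 (v i) (v j)) ≤ β) :
    (Fintype.card ι * α) ^ 2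
      ≤ ‖u‖ ^ 2 * (∑ i, ‖v i‖ ^ 2 + Fintype.card ι * (Fintype.card ι - 1) * β) := by
  have hcorr : Fintype.card ι * α ≤ ‖u‖ * ‖∑ i, v i‖ :=
    calc Fintype.card ι * α = ∑ _i : ι, α := by simp
      _ ≤ ∑ i, re (inner 𝕜 u (v i)) := sum_le_sum fun i _ => hα i
      _ = re (inner 𝕜 u (∑ i, v i)) := by rw [inner_sum, map_sum]
      _ ≤ ‖u‖ * ‖∑ i, v i‖ := re_inner_le_norm _ _
  calc (Fintype.card ι * α) ^ 2 ≤ (‖u‖ * ‖∑ i, v i‖) ^ 2 := by gcongr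
    _ = ‖u‖ ^ 2 * ‖∑ i, v i‖ ^ 2 := mul_pow _ _ _
    _ ≤ _ := by gcongr; exact norm_sum_sq_le_of_re_inner_le v hβ

end GramBound

lemma AddChar.map_sum_eq_prod {A M ι : Type*} [AddCommMonoid A] [CommMonoid M] (ψ : AddChar A M)
    (s : Finset ι) (f : ι → A) : ψ (∑ i ∈ s, f i) = ∏ i ∈ s, ψ (f i) := by
  simpa [← ofAdd_sum] using map_prod ψ.toMonoidHom (fun i => Multiplicative.ofAdd (f i)) s

lemma sum_prod_addChar_ite {R G : Type*} [CommRing R] [AddCommGroup G] (ψ : AddChar G R)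
    {n : ℕ} (d : Fin n → G) :
    ∑ x : Fin n → Bool, ∏ i, ψ (if x i then d i else 0) = ∏ i, (1 + ψ (d i)) := by
  rw [← Fintype.prod_sum (fun i (b : Bool) => ψ (if b then d i else 0))]
  simp [add_comm]

lemma stdAddChar_add_stdAddChar_neg {a : ZMod 3} (ha : a ≠ 0) :
    stdAddChar a + stdAddChar (-a) = -1 := by
  have hsum := AddChar.sum_eq_zero_of_ne_one (isPrimitive_stdAddChar 3 ha)
  have h3 : ∀ g : ZMod 3 → ℂ, ∑ x, g x = g 0 + g 1 + g 2 := fun g => Fin.sum_univ_three g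
  have h2a : a * 2 = -a := by
    linear_combination (norm := skip) a * (ZMod.natCast_self 3)
    push_cast; ring
  rw [h3] at hsum
  simp only [AddChar.mulShift_apply, mul_one, h2a, AddChar.map_zero_eq_one] at hsum
  linear_combination hsum

lemma re_stdAddChar (a : ZMod 3) : (stdAddChar a).re = if a = 0 then 1 else -1 / 2 := by
  split_ifs with ha
  · simp [ha]
  · have h := congrArg Complex.re (stdAddChar_add_stdAddChar_neg ha)
    rw [AddChar.map_neg_eq_conj, Complex.add_re, Complex.conj_re] at h
    simp at h
    linarith

lemma norm_one_add_stdAddChar (a : ZMod 3) : ‖1 + stdAddChar a‖ = if a = 0 then 2 else 1 := by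
  split_ifs with ha
  · simp [ha]; norm_num
  · rw [show 1 + stdAddChar a = -stdAddChar (-a) by
      linear_combination stdAddChar_add_stdAddChar_neg ha]
    simp

lemma linEval3_sub {n : ℕ} (p q : ZMod 3 × (Fin n → ZMod 3)) (x : Fin n → Bool) :
    linEval3 q x - linEval3 p x = linEval3 (q - p) x := by
  simp only [linEval3, Prod.fst_sub, Prod.snd_sub, Pi.sub_apply]
  have : ∀ i, (if x i then q.2 i - p.2 i else 0)
      = (if x i then q.2 i else 0) - (if x i then p.2 i else 0) := fun i => by split_ifs <;> simp
  simp only [this, sum_sub_distrib]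
  ring

lemma sum_addChar_linEval3 {R : Type*} [CommRing R] (ψ : AddChar (ZMod 3) R) {n : ℕ}
    (p : ZMod 3 × (Fin n → ZMod 3)) :
    ∑ x, ψ (linEval3 p x) = ψ p.1 * ∏ i, (1 + ψ (p.2 i)) := by
  simp only [linEval3, AddChar.map_add_eq_mul, AddChar.map_sum_eq_prod, ← mul_sum,
    sum_prod_addChar_ite]

section CharVec

variable {X G : Type*} [Fintype X] [AddCommGroup G] [Finite G]

noncomputable def charVec (ψ : AddChar G ℂ) (g : X → G) : EuclideanSpace ℂ X :=
  WithLp.toLp 2 fun x => ψ (g x)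

lemma inner_charVec (ψ : AddChar G ℂ) (g h : X → G) :
    inner ℂ (charVec ψ g) (charVec ψ h) = ∑ x, ψ (h x - g x) := by
  simp only [charVec, PiLp.inner_apply, RCLike.inner_apply', ← AddChar.map_neg_eq_conj,
    ← AddChar.map_add_eq_mul, neg_add_eq_sub]

lemma norm_charVec_sq (ψ : AddChar G ℂ) (g : X → G) :
    ‖charVec ψ g‖ ^ 2 = Fintype.card X := by
  rw [← inner_self_eq_norm_sq (𝕜 := ℂ), inner_charVec]
  simp

end CharVec

lemma re_inner_charVec_stdAddChar {X : Type*} [Fintype X] (g h : X → ZMod 3) :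
    (inner ℂ (charVec stdAddChar g) (charVec stdAddChar h)).re
      = (3 * #{x | g x = h x} - Fintype.card X) / 2 := by
  rw [inner_charVec, Complex.re_sum]
  simp only [re_stdAddChar, sub_eq_zero]
  rw [sum_ite, sum_const, sum_const, nsmul_eq_mul, nsmul_eq_mul, ← card_univ,
    ← card_filter_add_card_filter_not (s := univ) (fun x => h x = g x)]
  simp only [eq_comm (a := h _)]
  push_cast
  ring

lemma norm_sum_stdAddChar_linEval3 {n : ℕ} (p : ZMod 3 × (Fin n → ZMod 3)) :
    ‖∑ x, stdAddChar (linEval3 p x)‖ = 2 ^ #{i | p.2 i = 0} := by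
  simp only [sum_addChar_linEval3, norm_mul, AddChar.norm_apply, one_mul, norm_prod,
    norm_one_add_stdAddChar, prod_ite, prod_const, one_pow, mul_one]

lemma norm_sum_stdAddChar_linEval3_le {n k : ℕ} (p : ZMod 3 × (Fin n → ZMod 3))
    (hk : k ≤ #{i | p.2 i ≠ 0}) :
    ‖∑ x, stdAddChar (linEval3 p x)‖ ≤ 2 ^ n / 2 ^ k := by
  have hcard := card_filter_add_card_filter_not (s := univ) (fun i => p.2 i = 0)
  rw [card_univ, Fintype.card_fin] at hcard
  simp only [← ne_eq] at hcard
  rw [norm_sum_stdAddChar_linEval3, le_div_iff₀ (by positivity), ← pow_add]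
  exact pow_le_pow_right₀ one_le_two (by omega)

theorem stmt_15_general (n t : ℕ) (f : (Fin n → Bool) → ZMod 3)
    (Φ : Fin t → ZMod 3 × (Fin n → ZMod 3))
    (hagree : ∀ i, ((2 : ℚ) ^ n) ≤
      2 * Nat.card {x : Fin n → Bool | f x = linEval3 (Φ i) x})
    (hdiff : ∀ i j, i ≠ j →
      6 ≤ Nat.card {v : Fin n | (Φ i).2 v ≠ (Φ j).2 v}) :
    t ≤ 31 := by
  set u := charVec stdAddChar f
  set v := fun i => charVec stdAddChar (linEval3 (Φ i))
  have hα : ∀ i, (2 ^ n / 4 : ℝ) ≤ (inner ℂ u (v i)).re := by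
    intro i
    have h := hagree i
    simp only [Set.coe_ofPred, Nat.card_eq_fintype_card, Fintype.card_subtype] at h
    have h' : (2 : ℝ) ^ n ≤ 2 * #{x | f x = linEval3 (Φ i) x} := by exact_mod_cast h
    rw [re_inner_charVec_stdAddChar, Fintype.card_fun, Fintype.card_bool, Fintype.card_fin]
    push_cast
    linarith
  have hβ : ∀ i j, i ≠ j → (inner ℂ (v i) (v j)).re ≤ 2 ^ n / 2 ^ 6 := by
    intro i j hij
    rw [inner_charVec]
    simp only [linEval3_sub]
    refine (Complex.re_le_norm _).trans (norm_sum_stdAddChar_linEval3_le _ ?_)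
    simpa [Nat.card_eq_fintype_card, Fintype.card_subtype, sub_ne_zero] using hdiff j i hij.symm
  have key := sq_card_mul_le_of_re_inner_bounds (𝕜 := ℂ) u v
    (by positivity : (0 : ℝ) ≤ 2 ^ n / 4) hα hβ
  simp only [v, u, norm_charVec_sq, Fintype.card_fun, Fintype.card_bool, Fintype.card_fin,
    sum_const, card_univ, nsmul_eq_mul] at key
  push_cast at key
  have ht : (2 ^ n) ^ 2 * (t * (3 * t - 63)) ≤ (0 : ℝ) := by linarith
  have ht' : (t : ℝ) * (3 * t - 63) ≤ 0 := nonpos_of_mul_nonpos_right ht (by positivity)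
  have : (t : ℝ) ≤ 21 := by nlinarith
  exact_mod_cast this.trans (by norm_num : (21 : ℝ) ≤ 31)

/-- Distinct degree-1 polynomials over `ℤ_3`, each agreeing with `f` on at least half
the cube and pairwise differing in at least `6` variables, number at most `31`. -/
theorem stmt_15 (n t : ℕ) (f : (Fin n → Bool) → ZMod 3)
    (Φ : Fin t → ZMod 3 × (Fin n → ZMod 3)) (hΦ : Function.Injective Φ)
    (hagree : ∀ i, ((2 : ℚ) ^ n) ≤
      2 * Nat.card {x : Fin n → Bool | f x = linEval3 (Φ i) x})
    (hdiff : ∀ i j, i ≠ j →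
      6 ≤ Nat.card {v : Fin n | (Φ i).2 v ≠ (Φ j).2 v}) :
    t ≤ 31 :=
  stmt_15_general n t f Φ hagree hdiff
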